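/- Under the blanket assumptions with block structure f(x) = Σ_{i=1}^N f_i(x_i), assume the level set X := {x: F(x) ≤ F(x⁰)} is nonempty and compact, fix α̲ > 0, and let S := {(x,y) ∈ X × 𝒴: η(x,y) > 0}, where ḡ := sup_{z∈X} g(z), X_{α̲} := {z: dist²(z,X) ≤ ḡ/α̲} and 𝒴 := ∪_{z ∈ X_{α̲}} ∂g(z). Let (x,y) ∈ S with Q(x,y) ≤ F(x⁰), σ > 0, α > 0, i ∈ {1,…,N}, x⁺_i ∈ prox_{αf_i}(x_i − α∇_i h(x) + α Q(x,y) y_i), and let x⁺ be obtained from x by replacing its i-th block with x⁺_i. If ζ(x⁺) + (σ/2)‖x⁺ − x‖₂² ≤ c·η(x⁺, y) holds for some c ∈ [0, F(x⁰)], then (x⁺, y) ∈ S. -/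

import Mathlib

open Filter Topology Set
open scoped RealInnerProductSpace Pointwise NNReal

noncomputable section

namespace Paper

variable {E : Type*} [NormedAddCommGroup E] [InnerProductSpace ℝ E]

/-- The effective domain of an extended-real-valued function. -/
def edom (φ : E → EReal) : Set E := {x | φ x ≠ ⊤}

/-- A function with values in `(-∞, +∞]` is proper if it is not identically `+∞`
and never takes the value `-∞`. -/
def Proper (φ : E → EReal) : Prop := (∃ x, φ x ≠ ⊤) ∧ ∀ x, φ x ≠ ⊥

/-- The Fréchet subdifferential of `φ` at `x`. -/
def frSubdiff (φ : E → EReal) (x : E) : Set E :=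
  {y | φ x ≠ ⊤ ∧ 0 ≤ Filter.liminf
      (fun z : E => (φ z - φ x - ((⟪y, z - x⟫ : ℝ) : EReal)) * ((‖z - x‖⁻¹ : ℝ) : EReal))
      (𝓝[≠] x)}

/-- The limiting (Mordukhovich) subdifferential of `φ` at `x`. -/
def limSubdiff (φ : E → EReal) (x : E) : Set E :=
  {y | ∃ u v : ℕ → E,
      Tendsto u atTop (𝓝 x) ∧ Tendsto (fun k => φ (u k)) atTop (𝓝 (φ x)) ∧
      (∀ k, v k ∈ frSubdiff φ (u k)) ∧ Tendsto v atTop (𝓝 y)}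

/-- The convex subdifferential of a real-valued function. -/
def cvxSubdiff (g : E → ℝ) (x : E) : Set E :=
  {y | ∀ z, g x + ⟪y, z - x⟫ ≤ g z}

/-- The convex subdifferential of an extended-real-valued function. -/
def cvxSubdiffE (φ : E → EReal) (x : E) : Set E :=
  {y | ∀ z, φ x + ((⟪y, z - x⟫ : ℝ) : EReal) ≤ φ z}

/-- The Fenchel conjugate of an extended-real-valued function. -/
def fconjE (φ : E → EReal) : E → EReal :=
  fun y => ⨆ x : E, (((⟪x, y⟫ : ℝ) : EReal) - φ x)

/-- The Fenchel conjugate of a real-valued function. -/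
def fconj (g : E → ℝ) : E → EReal := fconjE (fun x => ((g x : ℝ) : EReal))

/-- `φ` satisfies the calmness condition at `x` relative to `A`. -/
def CalmAt (φ : E → EReal) (x : E) (A : Set E) : Prop :=
  ∃ κ : ℝ, 0 < κ ∧ ∃ B ∈ 𝓝 x, ∀ u ∈ B ∩ A,
    φ u ≤ φ x + ((κ * ‖u - x‖ : ℝ) : EReal) ∧ φ x ≤ φ u + ((κ * ‖u - x‖ : ℝ) : EReal)

/-- `φ` satisfies the calmness condition on `A`. -/
def CalmOn (φ : E → EReal) (A : Set E) : Prop := ∀ x ∈ A, CalmAt φ x A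

/-- The Kurdyka–Łojasiewicz property of `φ` at `x`. -/
def KLAt (φ : E → EReal) (x : E) : Prop :=
  ∃ ε > (0 : ℝ), ∃ δ > (0 : ℝ), ∃ ϕ ϕ' : ℝ → ℝ,
    ϕ 0 = 0 ∧ ContinuousOn ϕ (Set.Ico 0 ε) ∧ ConcaveOn ℝ (Set.Ico 0 ε) ϕ ∧
    (∀ s ∈ Set.Ioo (0 : ℝ) ε, HasDerivAt ϕ (ϕ' s) s) ∧
    ContinuousOn ϕ' (Set.Ioo 0 ε) ∧ (∀ s ∈ Set.Ioo (0 : ℝ) ε, 0 < ϕ' s) ∧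
    ∀ z ∈ Metric.ball x δ, φ x < φ z → φ z < φ x + (ε : EReal) →
      1 ≤ ENNReal.ofReal (ϕ' ((φ z).toReal - (φ x).toReal)) *
        EMetric.infEdist (0 : E) (limSubdiff φ z)

/-- The KL property of `φ` at `x` with exponent `θ`. -/
def KLExpAt (φ : E → EReal) (x : E) (θ : ℝ) : Prop :=
  ∃ c > (0 : ℝ), ∃ ε > (0 : ℝ), ∃ δ > (0 : ℝ),
    ∀ z ∈ Metric.ball x δ, φ x < φ z → φ z < φ x + (ε : EReal) →
      ENNReal.ofReal (c * ((φ z).toReal - (φ x).toReal) ^ θ) ≤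
        EMetric.infEdist (0 : E) (limSubdiff φ z)

/-- The (possibly multivalued) proximity operator of `φ`. -/
def proxSet (φ : E → EReal) (u : E) : Set E :=
  {z | ∀ w, φ z + ((‖z - u‖ ^ 2 / 2 : ℝ) : EReal) ≤ φ w + ((‖w - u‖ ^ 2 / 2 : ℝ) : EReal)}

/-- A positive scaling of an extended-real-valued function. -/
def scaleE (α : ℝ) (φ : E → EReal) : E → EReal := fun x => ((α : ℝ) : EReal) * φ x

/-- `h` is locally Lipschitz differentiable on `s`. -/
def LocLipGradOn [CompleteSpace E] (h : E → ℝ) (s : Set E) : Prop :=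
  (∀ x ∈ s, DifferentiableAt ℝ h x) ∧
  ∀ x ∈ s, ∃ U ∈ 𝓝 x, ∃ L : ℝ, ∀ u ∈ U ∩ s, ∀ v ∈ U ∩ s,
    ‖gradient h u - gradient h v‖ ≤ L * ‖u - v‖

/-- The numerator `ζ = f + h`. -/
def zeta (f : E → EReal) (h : E → ℝ) (x : E) : EReal := f x + ((h x : ℝ) : EReal)

/-- `η(x,y) = ⟨x,y⟩ − g^*(y)`. -/
def eta (g : E → ℝ) (x y : E) : EReal := ((⟪x, y⟫ : ℝ) : EReal) - fconj g y

/-- The extended objective of the fractional problem. -/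
def Ffun (f : E → EReal) (g h : E → ℝ) (x : E) : EReal :=
  if g x ≠ 0 ∧ f x ≠ ⊤ then ((((f x).toReal + h x) / g x : ℝ) : EReal) else ⊤

/-- The extended objective of the reformulated problem. -/
def Qfun (f : E → EReal) (g h : E → ℝ) (x y : E) : EReal :=
  if f x ≠ ⊤ ∧ 0 < eta g x y then
    ((((f x).toReal + h x) / (eta g x y).toReal : ℝ) : EReal) else ⊤

/-- Pack a pair into the `ℓ²` product space. -/
def mk2 (x y : E) : WithLp 2 (E × E) := (WithLp.equiv 2 (E × E)).symm (x, y)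

def pr1 (p : WithLp 2 (E × E)) : E := (WithLp.equiv 2 (E × E) p).1

def pr2 (p : WithLp 2 (E × E)) : E := (WithLp.equiv 2 (E × E) p).2

/-- `Q` as a function on the `ℓ²` product space. -/
def Qpair (f : E → EReal) (g h : E → ℝ) (p : WithLp 2 (E × E)) : EReal :=
  Qfun f g h (pr1 p) (pr2 p)

/-- The blanket assumptions of the paper. -/
structure Blanket [CompleteSpace E] (f : E → EReal) (g h : E → ℝ) : Prop where
  f_proper : Proper f
  f_lsc : LowerSemicontinuous f
  f_cont : ContinuousOn f (edom f)
  f_bddBelow : ∃ m : ℝ, ∀ x, (m : EReal) ≤ f x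
  h_lsc : LowerSemicontinuous h
  h_diff : LocLipGradOn h {x | g x ≠ 0}
  g_convex : ConvexOn ℝ Set.univ g
  g_nonneg : ∀ x, 0 ≤ g x
  omega_nonempty : ∃ x, g x ≠ 0
  zeta_nonneg : ∀ x, f x ≠ ⊤ → 0 ≤ zeta f h x

/-- `x` is a critical point of `F`: `0 ∈ ∂̂f(x) + ∇h(x) − F(x)·∂g(x)`. -/
def IsCritF [CompleteSpace E] (f : E → EReal) (g h : E → ℝ) (x : E) : Prop :=
  g x ≠ 0 ∧ f x ≠ ⊤ ∧
  ∃ u ∈ frSubdiff f x, ∃ v ∈ cvxSubdiff g x,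
    u + gradient h x - (Ffun f g h x).toReal • v = 0

/-- The level set `X = {x : F(x) ≤ F(x⁰)}`. -/
def lvlSet (f : E → EReal) (g h : E → ℝ) (x0 : E) : Set E :=
  {x | Ffun f g h x ≤ Ffun f g h x0}

/-- The enlargement `X_{α̲}` of the level set. -/
def Xal (f : E → EReal) (g h : E → ℝ) (x0 : E) (αl : ℝ) : Set E :=
  {z | (Metric.infDist z (lvlSet f g h x0)) ^ 2 ≤ sSup (g '' lvlSet f g h x0) / αl}

/-- The compact set `𝒴 = ∪_{z ∈ X_{α̲}} ∂g(z)`. -/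
def Yset (f : E → EReal) (g h : E → ℝ) (x0 : E) (αl : ℝ) : Set E :=
  ⋃ z ∈ Xal f g h x0 αl, cvxSubdiff g z

/-- The set `S = {(x,y) ∈ X × 𝒴 : η(x,y) > 0}`. -/
def Sset (f : E → EReal) (g h : E → ℝ) (x0 : E) (αl : ℝ) : Set (E × E) :=
  {p | p.1 ∈ lvlSet f g h x0 ∧ p.2 ∈ Yset f g h x0 αl ∧ 0 < eta g p.1 p.2}

/-- The set of accumulation points of a sequence. -/
def accSet {X : Type*} [TopologicalSpace X] (pt : ℕ → X) : Set X :=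
  {p | ∃ σ : ℕ → ℕ, StrictMono σ ∧ Tendsto (pt ∘ σ) atTop (𝓝 p)}

/-- A polyhedral function: its epigraph is a finite intersection of closed half-spaces. -/
def IsPolyhedralFn (φ : E → EReal) : Prop :=
  ∃ (m : ℕ) (w : Fin m → E) (c b : Fin m → ℝ),
    ∀ (x : E) (a : ℝ), (φ x ≤ (a : EReal) ↔ ∀ i, ⟪w i, x⟫ + c i * a ≤ b i)


/-- The block product space. -/
abbrev BE {N : ℕ} (d : Fin N → ℕ) : Type :=
  PiLp 2 fun i => EuclideanSpace ℝ (Fin (d i))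

/-- Update the `i`-th block of `x`. -/
def bUpd {N : ℕ} {d : Fin N → ℕ} (x : BE d) (i : Fin N)
    (w : EuclideanSpace ℝ (Fin (d i))) : BE d :=
  WithLp.toLp 2 (Function.update x i w)

/-- The block-separable function `f(x) = ∑ᵢ fᵢ(xᵢ)`. -/
def fsum {N : ℕ} {d : Fin N → ℕ} (fb : ∀ i, EuclideanSpace ℝ (Fin (d i)) → EReal)
    (x : BE d) : EReal := ∑ i, fb i (x i)

/-!
By Fenchel–Young, `η(z, y) ≤ g(z)` for every `z`, and `η(z, y) < +∞`. Since `ζ ≥ 0` on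
`dom f`, the descent inequality gives `c · η(x⁺, y) ≥ (σ/2)‖x⁺ − x‖²`. If `η(x⁺, y) ≤ 0`
this forces `x⁺ = x`, contradicting `η(x, y) > 0`. Hence `η(x⁺, y) > 0`, so `g(x⁺) > 0` and
`ζ(x⁺) ≤ c · η(x⁺, y) ≤ c · g(x⁺)`, that is `F(x⁺) ≤ c ≤ F(x⁰)`; the second component `y`
is unchanged.
-/

theorem coe_inner_sub_le_fconj (g : E → ℝ) (z y : E) :
    ((⟪z, y⟫ - g z : ℝ) : EReal) ≤ fconj g y := by
  rw [EReal.coe_sub]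
  exact le_iSup (fun x => ((⟪x, y⟫ : ℝ) : EReal) - ((g x : ℝ) : EReal)) z

theorem eta_le (g : E → ℝ) (z y : E) : eta g z y ≤ g z :=
  calc eta g z y ≤ ((⟪z, y⟫ : ℝ) : EReal) - ((⟪z, y⟫ - g z : ℝ) : EReal) :=
        EReal.sub_le_sub le_rfl (coe_inner_sub_le_fconj g z y)
    _ = g z := by rw [← EReal.coe_sub, sub_sub_cancel]

theorem eta_ne_top (g : E → ℝ) (z y : E) : eta g z y ≠ ⊤ :=
  ne_top_of_le_ne_top (EReal.coe_ne_top _) (eta_le g z y)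

section Descent

variable {f : E → EReal} {g h : E → ℝ} {x x' y : E} {c σ : ℝ}

theorem ne_top_of_zeta_add_le_mul_eta (hc : 0 ≤ c)
    (hineq : zeta f h x' + ((σ / 2 * ‖x' - x‖ ^ 2 : ℝ) : EReal) ≤
      (c : EReal) * eta g x' y) :
    f x' ≠ ⊤ := by
  have hrhs : (c : EReal) * eta g x' y ≠ ⊤ :=
    (EReal.mul_ne_top _ _).2 ⟨.inl (EReal.coe_ne_bot c), .inl (EReal.coe_nonneg.2 hc),
      .inl (EReal.coe_ne_top c), .inr (eta_ne_top g x' y)⟩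
  intro hf
  refine hrhs (top_le_iff.1 (le_trans (le_of_eq ?_) hineq))
  rw [zeta, hf, EReal.top_add_coe, EReal.top_add_coe]

theorem eta_pos_of_zeta_add_le_mul_eta (hσ : 0 < σ) (hc : 0 ≤ c) (hζ : 0 ≤ zeta f h x')
    (hxy : 0 < eta g x y)
    (hineq : zeta f h x' + ((σ / 2 * ‖x' - x‖ ^ 2 : ℝ) : EReal) ≤
      (c : EReal) * eta g x' y) :
    0 < eta g x' y := by
  by_contra! hle
  have hquad : ((σ / 2 * ‖x' - x‖ ^ 2 : ℝ) : EReal) ≤ 0 :=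
    calc ((σ / 2 * ‖x' - x‖ ^ 2 : ℝ) : EReal)
        ≤ zeta f h x' + ((σ / 2 * ‖x' - x‖ ^ 2 : ℝ) : EReal) := le_add_of_nonneg_left hζ
      _ ≤ (c : EReal) * eta g x' y := hineq
      _ ≤ 0 := mul_nonpos_of_nonneg_of_nonpos (EReal.coe_nonneg.2 hc) hle
  have hx' : x' = x := by
    have : σ / 2 * ‖x' - x‖ ^ 2 ≤ 0 := EReal.coe_nonpos.1 hquad
    have : ‖x' - x‖ ^ 2 = 0 := le_antisymm (by nlinarith) (sq_nonneg _)
    simpa [sub_eq_zero] using this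
  exact hle.not_gt (hx' ▸ hxy)

theorem Ffun_le_of_zeta_le_mul_eta (hf : f x' ≠ ⊥) (hfx' : f x' ≠ ⊤) (hc : 0 ≤ c)
    (heta : 0 < eta g x' y) (hζ : zeta f h x' ≤ (c : EReal) * eta g x' y) :
    Ffun f g h x' ≤ c := by
  have hg : 0 < g x' := EReal.coe_pos.1 (heta.trans_le (eta_le g x' y))
  have hζg : zeta f h x' ≤ ((c * g x' : ℝ) : EReal) :=
    calc zeta f h x' ≤ (c : EReal) * eta g x' y := hζ
      _ ≤ (c : EReal) * g x' :=
          mul_le_mul_of_nonneg_left (eta_le g x' y) (EReal.coe_nonneg.2 hc)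
      _ = ((c * g x' : ℝ) : EReal) := (EReal.coe_mul c (g x')).symm
  rw [zeta, ← EReal.coe_toReal hfx' hf, ← EReal.coe_add] at hζg
  rw [Ffun, if_pos ⟨hg.ne', hfx'⟩, EReal.coe_le_coe_iff, div_le_iff₀ hg]
  exact EReal.coe_le_coe_iff.1 hζg

theorem mem_Sset_of_zeta_add_le_mul_eta {x0 : E} {αl : ℝ} (hf : ∀ z, f z ≠ ⊥)
    (hζ : ∀ z, f z ≠ ⊤ → 0 ≤ zeta f h z) (hσ : 0 < σ) (hc : 0 ≤ c)
    (hcF : (c : EReal) ≤ Ffun f g h x0) (hS : (x, y) ∈ Sset f g h x0 αl)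
    (hineq : zeta f h x' + ((σ / 2 * ‖x' - x‖ ^ 2 : ℝ) : EReal) ≤
      (c : EReal) * eta g x' y) :
    (x', y) ∈ Sset f g h x0 αl := by
  obtain ⟨-, hy, hxy⟩ := hS
  have hfx' : f x' ≠ ⊤ := ne_top_of_zeta_add_le_mul_eta hc hineq
  have heta : 0 < eta g x' y := eta_pos_of_zeta_add_le_mul_eta hσ hc (hζ x' hfx') hxy hineq
  have hζc : zeta f h x' ≤ (c : EReal) * eta g x' y :=
    (le_add_of_nonneg_right (EReal.coe_nonneg.2 (by positivity))).trans hineq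
  exact ⟨(Ffun_le_of_zeta_le_mul_eta (hf x') hfx' hc heta hζc).trans hcF, hy, heta⟩

end Descent

theorem statement14_general {N : ℕ} {d : Fin N → ℕ}
    (fb : ∀ i, EuclideanSpace ℝ (Fin (d i)) → EReal)
    (g h : BE d → ℝ)
    (hb : Blanket (fsum fb) g h)
    (x0 : BE d) (αl : ℝ)
    (x y : BE d) (hS : (x, y) ∈ Sset (fsum fb) g h x0 αl)
    (σ : ℝ) (hσ : 0 < σ) (i : Fin N)
    (xi : EuclideanSpace ℝ (Fin (d i)))
    (c : ℝ) (hc0 : 0 ≤ c) (hcF : (c : EReal) ≤ Ffun (fsum fb) g h x0)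
    (hineq : zeta (fsum fb) h (bUpd x i xi) +
        ((σ / 2 * ‖bUpd x i xi - x‖ ^ 2 : ℝ) : EReal) ≤
      (c : EReal) * eta g (bUpd x i xi) y) :
    (bUpd x i xi, y) ∈ Sset (fsum fb) g h x0 αl :=
  mem_Sset_of_zeta_add_le_mul_eta hb.f_proper.2 hb.zeta_nonneg hσ hc0 hcF hS hineq

/-- A successful line-search step stays in `S`. -/
theorem statement14 {N : ℕ} {d : Fin N → ℕ}
    (fb : ∀ i, EuclideanSpace ℝ (Fin (d i)) → EReal)
    (g h : BE d → ℝ)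
    (hfb_proper : ∀ i, Proper (fb i)) (hfb_lsc : ∀ i, LowerSemicontinuous (fb i))
    (hfb_bdd : ∀ i, ∃ m : ℝ, ∀ w, (m : EReal) ≤ fb i w)
    (hb : Blanket (fsum fb) g h)
    (x0 : BE d) (hx0 : Ffun (fsum fb) g h x0 ≠ ⊤)
    (hne : (lvlSet (fsum fb) g h x0).Nonempty)
    (hcomp : IsCompact (lvlSet (fsum fb) g h x0))
    (αl : ℝ) (hαl : 0 < αl)
    (x y : BE d) (hS : (x, y) ∈ Sset (fsum fb) g h x0 αl)
    (hQ : Qfun (fsum fb) g h x y ≤ Ffun (fsum fb) g h x0)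
    (σ α : ℝ) (hσ : 0 < σ) (hα : 0 < α) (i : Fin N)
    (xi : EuclideanSpace ℝ (Fin (d i)))
    (hxi : xi ∈ proxSet (scaleE α (fb i))
        (x i - α • (gradient h x) i + (α * (Qfun (fsum fb) g h x y).toReal) • y i))
    (c : ℝ) (hc0 : 0 ≤ c) (hcF : (c : EReal) ≤ Ffun (fsum fb) g h x0)
    (hineq : zeta (fsum fb) h (bUpd x i xi) +
        ((σ / 2 * ‖bUpd x i xi - x‖ ^ 2 : ℝ) : EReal) ≤
      (c : EReal) * eta g (bUpd x i xi) y) :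
    (bUpd x i xi, y) ∈ Sset (fsum fb) g h x0 αl :=
  statement14_general fb g h hb x0 αl x y hS σ hσ i xi c hc0 hcF hineq
end Paper
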